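/- (Main Lemma of the Appendix) Under the stated hypotheses, the matrix Y = Z² satisfies the annihilating polynomial identity (Y − I)·((Y − (3/2)·I)² − (5/4)·I) = 0. -/

import Mathlib

/-!
Whitening by the Cholesky factors makes the rows of `C` orthonormal: `C * Cᵀ = 1`. Then
`Z = [[I, Cᵀ], [C, 0]]` acts as the identity on `ker C` and, on the vectors `(Cᵀ u, v)`, as
`[[1, 1], [1, 0]]`, so `(Z - 1)(Z² - Z - 1) = 0`. The eigenvalues `1, φ, -φ⁻¹` of `Z` become
`1, φ², φ⁻²` for `Y = Z²`, and `φ² + φ⁻² = 3`, `φ² φ⁻² = 1` give the factor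
`Y² - 3Y + 1 = (Y - 3/2)² - 5/4`; as polynomials in `Z`, `Y² - 3Y + 1 = (Z² - Z - 1)(Z² + Z - 1)`.
-/

open Matrix

theorem Matrix.fromBlocks_sub {l m n o α : Type*} [Sub α] (A : Matrix n l α) (B : Matrix n m α)
    (C : Matrix o l α) (D : Matrix o m α) (A' : Matrix n l α) (B' : Matrix n m α)
    (C' : Matrix o l α) (D' : Matrix o m α) :
    fromBlocks A B C D - fromBlocks A' B' C' D' =
      fromBlocks (A - A') (B - B') (C - C') (D - D') := by
  ext (_ | _) (_ | _) <;> rfl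

theorem Matrix.inv_mul_mul_transpose_eq_one {R m n : Type*} [CommRing R] [Fintype m]
    [DecidableEq m] [Fintype n] (M : Matrix m m R) (hM : IsUnit M) (G : Matrix m n R)
    (h : M * Mᵀ = G * Gᵀ) :
    M⁻¹ * G * (M⁻¹ * G)ᵀ = 1 := by
  have hdet : IsUnit M.det := (isUnit_iff_isUnit_det M).mp hM
  rw [transpose_mul, transpose_nonsing_inv, Matrix.mul_assoc, ← Matrix.mul_assoc G, ← h,
    mul_nonsing_inv_cancel_right (A := Mᵀ) M (by rwa [det_transpose]), nonsing_inv_mul _ hdet]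

theorem Matrix.fromBlocks_sub_one_mul_sq_sub_sub_one_eq_zero {R m n : Type*} [Ring R]
    [Fintype m] [Fintype n] [DecidableEq m] [DecidableEq n]
    (C : Matrix m n R) (D : Matrix n m R) (hCD : C * D = 1) :
    (fromBlocks 1 D C 0 - 1) * (fromBlocks 1 D C 0 ^ 2 - fromBlocks 1 D C 0 - 1) = 0 := by
  have hsq : fromBlocks 1 D C 0 ^ 2 - fromBlocks 1 D C 0 - 1 = fromBlocks (D * C - 1) 0 0 0 := by
    rw [sq, fromBlocks_multiply, ← fromBlocks_one, fromBlocks_sub, fromBlocks_sub]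
    simp [hCD]
  rw [hsq, ← fromBlocks_one, fromBlocks_sub, fromBlocks_multiply]
  simp [Matrix.mul_sub, ← Matrix.mul_assoc, hCD]

open Polynomial in
theorem sq_sub_one_mul_eq_zero_of_sub_one_mul_eq_zero {A : Type*} [Ring A] [Algebra ℝ A] (a : A)
    (h : (a - 1) * (a ^ 2 - a - 1) = 0) :
    (a ^ 2 - 1) * ((a ^ 2 - ((3 : ℝ) / 2) • 1) ^ 2 - ((5 : ℝ) / 4) • 1) = 0 := by
  have key : (X ^ 2 - 1) * ((X ^ 2 - C (3 / 2 : ℝ)) ^ 2 - C (5 / 4)) =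
      (X + 1) * (X ^ 2 + X - 1) * ((X - 1) * (X ^ 2 - X - 1)) := by
    have e1 : C (3 / 2 : ℝ) * 2 = 3 := by
      rw [← C_ofNat, ← C_mul, ← C_ofNat]; norm_num
    have e2 : C (3 / 2 : ℝ) ^ 2 - C (5 / 4) = 1 := by
      rw [← C_pow, ← C_sub]; norm_num
    linear_combination (X ^ 2 - X ^ 4) * e1 + (X ^ 2 - 1) * e2
  simpa [Algebra.algebraMap_eq_smul_one, h] using congrArg (aeval a) key

theorem stmt_7_general (n p : ℕ) (L : Matrix (Fin n) (Fin n) ℝ) (M : Matrix (Fin p) (Fin p) ℝ)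
    (B : Matrix (Fin p) (Fin n) ℝ) (hM : IsUnit M)
    (hS : M * Mᵀ = B * Lᵀ⁻¹ * L⁻¹ * Bᵀ)
    (C : Matrix (Fin p) (Fin n) ℝ) (hC : C = M⁻¹ * B * Lᵀ⁻¹)
    (Z : Matrix (Fin n ⊕ Fin p) (Fin n ⊕ Fin p) ℝ) (hZ : Z = fromBlocks 1 Cᵀ C 0)
    (Y : Matrix (Fin n ⊕ Fin p) (Fin n ⊕ Fin p) ℝ) (hY : Y = Z ^ 2) :
    (Y - 1) * ((Y - ((3 : ℝ) / 2) • 1) ^ 2 - ((5 : ℝ) / 4) • 1) = 0 := by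
  have hCCt : C * Cᵀ = 1 := by
    rw [hC, Matrix.mul_assoc M⁻¹ B]
    refine inv_mul_mul_transpose_eq_one M hM (B * Lᵀ⁻¹) ?_
    rw [hS, transpose_mul, transpose_nonsing_inv, transpose_transpose]
    simp only [Matrix.mul_assoc]
  subst hY hZ
  exact sq_sub_one_mul_eq_zero_of_sub_one_mul_eq_zero _
    (fromBlocks_sub_one_mul_sq_sub_sub_one_eq_zero C Cᵀ hCCt)

/-- Main Lemma of the Appendix: with `Z = [[I, Cᵀ], [C, 0]]` and `Y = Z²`,
the annihilating polynomial identity `(Y - I) * ((Y - (3/2)·I)² - (5/4)·I) = 0` holds. -/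
theorem stmt_7 (n p : ℕ) (L : Matrix (Fin n) (Fin n) ℝ) (M : Matrix (Fin p) (Fin p) ℝ)
    (B : Matrix (Fin p) (Fin n) ℝ) (hL : IsUnit L) (hM : IsUnit M)
    (hS : M * Mᵀ = B * Lᵀ⁻¹ * L⁻¹ * Bᵀ)
    (C : Matrix (Fin p) (Fin n) ℝ) (hC : C = M⁻¹ * B * Lᵀ⁻¹)
    (Z : Matrix (Fin n ⊕ Fin p) (Fin n ⊕ Fin p) ℝ) (hZ : Z = fromBlocks 1 Cᵀ C 0)
    (Y : Matrix (Fin n ⊕ Fin p) (Fin n ⊕ Fin p) ℝ) (hY : Y = Z ^ 2) :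
    (Y - 1) * ((Y - ((3 : ℝ) / 2) • 1) ^ 2 - ((5 : ℝ) / 4) • 1) = 0 :=
  stmt_7_general n p L M B hM hS C hC Z hZ Y hY
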